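/- arXiv:math/0408232 — 4 statements merged into one kernel-verified Lean document; each statement's English description precedes it below -/
import Mathlib

section
/- Let G be twin-free with |V(G)| = m, and suppose φ, ψ: [1,m] → V(G) are equivalent (hom_φ(F,G) = hom_ψ(F,G) for all m-labeled graphs F) with φ bijective. Then ψ satisfies β_{ψ(i)ψ(j)} = β_{φ(i)φ(j)} for all i,j, and hence ψ is also bijective. -/
open scoped BigOperators Classical

/-- A `k`-labeled graph: a finite multigraph (no loops) with `k` distinct
nodes labeled `1, …, k`. -/
structure KGraph (k : ℕ) where
  V : Type
  [fV : Fintype V]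
  [dV : DecidableEq V]
  lab : Fin k → V
  lab_inj : Function.Injective lab
  edges : Multiset (V × V)
  loopless : ∀ e ∈ edges, e.1 ≠ e.2

attribute [instance] KGraph.fV KGraph.dV

/-- The weighted partial homomorphism number `hom_φ(F, G)`, for a weighted graph `G`
on node set `W` with node weights `α` and edge weights `β`. -/
noncomputable def homPhi {k : ℕ} {W : Type} [Fintype W] [DecidableEq W]
    (α : W → ℝ) (β : W → W → ℝ) (F : KGraph k) (φ : Fin k → W) : ℝ :=
  ∑ ψ ∈ Finset.univ.filter (fun ψ : F.V → W => ψ ∘ F.lab = φ),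
    ((∏ u, α (ψ u)) / ∏ i, α (φ i)) *
      (F.edges.map (fun e => β (ψ e.1) (ψ e.2))).prod

/-- The full weighted homomorphism number `hom(F, G)` (labels ignored). -/
noncomputable def homT {k : ℕ} {W : Type} [Fintype W] [DecidableEq W]
    (α : W → ℝ) (β : W → W → ℝ) (F : KGraph k) : ℝ :=
  ∑ ψ : F.V → W, (∏ u, α (ψ u)) * (F.edges.map (fun e => β (ψ e.1) (ψ e.2))).prod

/-- Embedding of the vertices of `F₂` into the gluing product `F₁F₂`. -/
noncomputable def KGraph.emb {k : ℕ} (F₁ F₂ : KGraph k) (v : F₂.V) :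
    F₁.V ⊕ {v : F₂.V // v ∉ Set.range F₂.lab} :=
  if h : v ∈ Set.range F₂.lab then
    Sum.inl (F₁.lab ((Equiv.ofInjective F₂.lab F₂.lab_inj).symm ⟨v, h⟩))
  else Sum.inr ⟨v, h⟩

theorem KGraph.emb_inj {k : ℕ} (F₁ F₂ : KGraph k) :
    Function.Injective (KGraph.emb F₁ F₂) := by
  intro a b hab
  by_cases h1 : a ∈ Set.range F₂.lab <;> by_cases h2 : b ∈ Set.range F₂.lab
  · rw [KGraph.emb, dif_pos h1, KGraph.emb, dif_pos h2] at hab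
    have h3 := F₁.lab_inj (Sum.inl.inj hab)
    have h4 := (Equiv.ofInjective F₂.lab F₂.lab_inj).symm.injective h3
    simpa using congrArg Subtype.val h4
  · rw [KGraph.emb, dif_pos h1, KGraph.emb, dif_neg h2] at hab
    exact absurd hab (by simp)
  · rw [KGraph.emb, dif_neg h1, KGraph.emb, dif_pos h2] at hab
    exact absurd hab (by simp)
  · rw [KGraph.emb, dif_neg h1, KGraph.emb, dif_neg h2] at hab
    simpa using Sum.inr.inj hab

/-- The gluing product `F₁F₂` of two `k`-labeled graphs: take the disjoint union
and identify equally-labeled nodes. -/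
noncomputable def glue {k : ℕ} (F₁ F₂ : KGraph k) : KGraph k where
  V := F₁.V ⊕ {v : F₂.V // v ∉ Set.range F₂.lab}
  lab := fun i => Sum.inl (F₁.lab i)
  lab_inj := Sum.inl_injective.comp F₁.lab_inj
  edges := F₁.edges.map (fun e => (Sum.inl e.1, Sum.inl e.2)) +
    F₂.edges.map (fun e => (KGraph.emb F₁ F₂ e.1, KGraph.emb F₁ F₂ e.2))
  loopless := by
    intro e he
    simp only [Multiset.mem_add, Multiset.mem_map] at he
    rcases he with ⟨a, ha, rfl⟩ | ⟨a, ha, rfl⟩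
    · simpa using F₁.loopless a ha
    · exact fun h => F₂.loopless a ha (KGraph.emb_inj F₁ F₂ h)

/-- `σ` is an automorphism of the weighted graph given by `(α, β)`. -/
def IsAut {W : Type} (α : W → ℝ) (β : W → W → ℝ) (σ : Equiv.Perm W) : Prop :=
  (∀ v, α (σ v) = α v) ∧ ∀ u v, β (σ u) (σ v) = β u v

/-- The number of orbits of `Aut(G)` acting coordinatewise on `V(G)^k`. -/
noncomputable def orbCount {W : Type} [Fintype W] (α : W → ℝ) (β : W → W → ℝ)
    (k : ℕ) : ℕ :=
  Nat.card (Quot (fun φ ψ : Fin k → W =>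
    ∃ σ : Equiv.Perm W, IsAut α β σ ∧ ψ = σ ∘ φ))

lemma moment_lemma {m : ℕ} {ι : Type} [Fintype ι] (p : ι → (Fin m → ℝ)) (c : ι → ℝ)
    (h : ∀ t : Fin m → ℕ, ∑ i, c i * ∏ u, p i u ^ t u = 0) (i0 : ι) :
    ∑ i ∈ Finset.univ.filter (fun i => p i = p i0), c i = 0 := by
  have hL : ∀ P : MvPolynomial (Fin m) ℝ, ∑ i, c i * MvPolynomial.eval (p i) P = 0 := by
    intro P
    induction P using MvPolynomial.induction_on' with
    | monomial t a =>
      simp only [MvPolynomial.eval_monomial, Finsupp.prod_pow]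
      have : ∑ i, c i * (a * ∏ u, p i u ^ t u) = a * ∑ i, c i * ∏ u, p i u ^ t u := by
        rw [Finset.mul_sum]; exact Finset.sum_congr rfl fun i _ => by ring
      rw [this, h, mul_zero]
    | add P Q hP hQ =>
      simp only [map_add, mul_add, Finset.sum_add_distrib, hP, hQ, add_zero]
  set S := (Finset.univ.image p).erase (p i0) with hS
  have key : ∀ q : {x // x ∈ S}, ∃ u, (q : Fin m → ℝ) u ≠ p i0 u := by
    intro q
    exact Function.ne_iff.mp (Finset.mem_erase.mp q.2).1
  choose uc huc using key
  set Q : MvPolynomial (Fin m) ℝ :=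
    ∏ q ∈ S.attach, (MvPolynomial.X (uc q) - MvPolynomial.C ((q : Fin m → ℝ) (uc q))) with hQdef
  have heval : ∀ x : Fin m → ℝ, MvPolynomial.eval x Q =
      ∏ q ∈ S.attach, (x (uc q) - (q : Fin m → ℝ) (uc q)) := by
    intro x
    rw [hQdef, map_prod]
    exact Finset.prod_congr rfl fun q _ => by simp
  have hE : MvPolynomial.eval (p i0) Q ≠ 0 := by
    rw [heval]
    exact Finset.prod_ne_zero_iff.mpr fun q _ => sub_ne_zero.mpr (Ne.symm (huc q))
  have hzero : ∀ i, p i ≠ p i0 → MvPolynomial.eval (p i) Q = 0 := by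
    intro i hi
    have hmem : p i ∈ S := Finset.mem_erase.mpr ⟨hi, Finset.mem_image_of_mem p (Finset.mem_univ i)⟩
    rw [heval]
    exact Finset.prod_eq_zero (Finset.mem_attach S ⟨p i, hmem⟩) (by simp)
  have := hL Q
  rw [← Finset.sum_filter_add_sum_filter_not Finset.univ (fun i => p i = p i0)] at this
  have h2 : ∑ i ∈ Finset.univ.filter (fun i => ¬ p i = p i0), c i * MvPolynomial.eval (p i) Q = 0 := by
    refine Finset.sum_eq_zero fun i hi => ?_
    rw [hzero i (Finset.mem_filter.mp hi).2, mul_zero]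
  rw [h2, add_zero] at this
  have h3 : ∑ i ∈ Finset.univ.filter (fun i => p i = p i0), c i * MvPolynomial.eval (p i) Q =
      (∑ i ∈ Finset.univ.filter (fun i => p i = p i0), c i) * MvPolynomial.eval (p i0) Q := by
    rw [Finset.sum_mul]
    exact Finset.sum_congr rfl fun i hi => by rw [(Finset.mem_filter.mp hi).2]
  rw [h3] at this
  exact (mul_eq_zero.mp this).resolve_right hE

/-- single edge between labels `i` and `j`. -/
noncomputable def oneEdge {m : ℕ} (i j : Fin m) (hij : i ≠ j) : KGraph m where
  V := Fin m
  lab := id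
  lab_inj := fun a b hab => hab
  edges := {(i, j)}
  loopless := by
    intro e he
    rw [Multiset.mem_singleton] at he
    subst he
    exact hij

lemma homPhi_oneEdge {m : ℕ} (α : Fin m → ℝ) (β : Fin m → Fin m → ℝ)
    (hα : ∀ i, 0 < α i) (i j : Fin m) (hij : i ≠ j) (χ : Fin m → Fin m) :
    homPhi α β (oneEdge i j hij) χ = β (χ i) (χ j) := by
  have hne : (∏ l, α (χ l)) ≠ 0 :=
    Finset.prod_ne_zero_iff.mpr fun l _ => ne_of_gt (hα (χ l))
  rw [homPhi]
  refine (Finset.sum_eq_single_of_mem χ ?_ (fun ψ hψ hne' =>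
    absurd (funext fun o => congrFun (Finset.mem_filter.mp hψ).2 o) hne')).trans ?_
  · exact Finset.mem_filter.mpr ⟨Finset.mem_univ _, rfl⟩
  · show ((∏ u, α (χ u)) / ∏ l, α (χ l)) *
      ((Multiset.map (fun e : Fin m × Fin m => β (χ e.1) (χ e.2)) {(i, j)}).prod) = _
    rw [Multiset.map_singleton, Multiset.prod_singleton, div_self hne, one_mul]

/-- star: one unlabeled center, `t j` edges from label `j` to the center. -/
noncomputable def starG {m : ℕ} (t : Fin m → ℕ) : KGraph m where
  V := Option (Fin m)
  lab := some
  lab_inj := fun a b hab => Option.some_injective _ hab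
  edges := Finset.univ.val.bind fun j => Multiset.replicate (t j) (some j, (none : Option (Fin m)))
  loopless := by
    intro e he
    simp only [Multiset.mem_bind, Multiset.mem_replicate] at he
    obtain ⟨j, -, -, rfl⟩ := he
    simp

lemma homPhi_starG {m : ℕ} (α : Fin m → ℝ) (β : Fin m → Fin m → ℝ)
    (hα : ∀ i, 0 < α i) (t : Fin m → ℕ) (χ : Fin m → Fin m) :
    homPhi α β (starG t) χ = ∑ w, α w * ∏ j, β (χ j) w ^ t j := by
  have hne : (∏ l, α (χ l)) ≠ 0 :=
    Finset.prod_ne_zero_iff.mpr fun l _ => ne_of_gt (hα (χ l))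
  rw [homPhi]
  refine Finset.sum_nbij' (fun ψ : (starG t).V → Fin m => ψ none)
    (fun w => fun o => Option.elim o w χ) ?_ ?_ ?_ ?_ ?_
  · intro ψ _; exact Finset.mem_univ _
  · intro w _
    simp only [Finset.mem_filter, Finset.mem_univ, true_and]
    funext l
    rfl
  · intro ψ hψ
    simp only [Finset.mem_filter, Finset.mem_univ, true_and] at hψ
    funext o
    cases o with
    | none => rfl
    | some l => exact (congrFun hψ l : _).symm
  · intro w _; rfl
  · intro ψ hψ
    simp only [Finset.mem_filter, Finset.mem_univ, true_and] at hψ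
    set w := ψ none with hw
    have hψeq : ψ = fun o => Option.elim o w χ := by
      funext o
      cases o with
      | none => rfl
      | some l => exact (congrFun hψ l : _)
    rw [hψeq]
    show ((∏ u : Option (Fin m), α (Option.elim u w χ)) / ∏ l, α (χ l)) *
        ((Multiset.map (fun e => β (Option.elim e.1 w χ) (Option.elim e.2 w χ))
          (Finset.univ.val.bind fun j =>
            Multiset.replicate (t j) ((some j : Option (Fin m)), (none : Option (Fin m))))).prod)
        = α w * ∏ j, β (χ j) w ^ t j
    have h1 : (∏ u : Option (Fin m), α (Option.elim u w χ)) = α w * ∏ l, α (χ l) := by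
      rw [Fintype.prod_option]; rfl
    have h2 : ((Finset.univ.val.bind fun j =>
        Multiset.replicate (t j) ((some j : Option (Fin m)), (none : Option (Fin m)))).map
          (fun e => β (Option.elim e.1 w χ) (Option.elim e.2 w χ))).prod
        = ∏ j, β (χ j) w ^ t j := by
      rw [Multiset.map_bind, Multiset.prod_bind]
      have h3 : (Finset.univ.val.map fun j => (Multiset.map
          (fun e : Option (Fin m) × Option (Fin m) => β (Option.elim e.1 w χ) (Option.elim e.2 w χ))
          (Multiset.replicate (t j) ((some j : Option (Fin m)), none))).prod)
          = Finset.univ.val.map fun j => β (χ j) w ^ t j := by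
        apply Multiset.map_congr rfl
        intro l _
        rw [Multiset.map_replicate, Multiset.prod_replicate]
        rfl
      rw [h3]
      rfl
    rw [h1, h2, mul_div_assoc, div_self hne, mul_one]

/-- Claim 3, first part: if `G` is twin-free on `m` nodes, `φ, ψ : [1,m] → V(G)`
are equivalent and `φ` is bijective, then `ψ` preserves the corresponding edge weights and is
itself bijective. -/
theorem equivalent_of_bijective {m : ℕ} (α : Fin m → ℝ) (β : Fin m → Fin m → ℝ)
    (hα : ∀ i, 0 < α i) (hβ : ∀ i j, β i j = β j i)
    (htf : ∀ i j : Fin m, (∀ l, β i l = β j l) → i = j)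
    (φ ψ : Fin m → Fin m) (hφ : Function.Bijective φ)
    (h : ∀ F : KGraph m, homPhi α β F φ = homPhi α β F ψ) :
    (∀ i j, β (ψ i) (ψ j) = β (φ i) (φ j)) ∧ Function.Bijective ψ := by
  have hii : ∀ i j : Fin m, i ≠ j → β (ψ i) (ψ j) = β (φ i) (φ j) := by
    intro i j hij
    have hh := h (oneEdge i j hij)
    rw [homPhi_oneEdge α β hα i j hij φ, homPhi_oneEdge α β hα i j hij ψ] at hh
    exact hh.symm
  have hPφinj : ∀ a b : Fin m, (fun v => β (φ v) a) = (fun v => β (φ v) b) → a = b := by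
    intro a b hab
    apply htf
    intro l
    obtain ⟨v, rfl⟩ := hφ.2 l
    rw [hβ a (φ v), hβ b (φ v)]
    exact congrFun hab v
  -- the moment identity from star graphs
  set p : Fin m ⊕ Fin m → (Fin m → ℝ) :=
    Sum.elim (fun w => fun v => β (ψ v) w) (fun w => fun v => β (φ v) w) with hpdef
  set c : Fin m ⊕ Fin m → ℝ := Sum.elim α (fun w => -α w) with hcdef
  have hmom : ∀ t : Fin m → ℕ, ∑ i, c i * ∏ u, p i u ^ t u = 0 := by
    intro t
    have hstar := h (starG t)
    rw [homPhi_starG α β hα t φ, homPhi_starG α β hα t ψ] at hstar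
    rw [Fintype.sum_sum_type]
    simp only [hpdef, hcdef, Sum.elim_inl, Sum.elim_inr, neg_mul]
    rw [Finset.sum_neg_distrib, ← hstar]
    ring
  have hsplit : ∀ q : Fin m → ℝ,
      ((∃ w, (fun v => β (ψ v) w) = q) ∨ (∃ z, (fun v => β (φ v) z) = q)) →
      ∑ w ∈ Finset.univ.filter (fun w => (fun v => β (ψ v) w) = q), α w =
      ∑ z ∈ Finset.univ.filter (fun z => (fun v => β (φ v) z) = q), α z := by
    intro q hq
    have hi0 : ∃ i0 : Fin m ⊕ Fin m, p i0 = q := by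
      rcases hq with ⟨w, hw⟩ | ⟨z, hz⟩
      · exact ⟨Sum.inl w, hw⟩
      · exact ⟨Sum.inr z, hz⟩
    obtain ⟨i0, hi0⟩ := hi0
    have hml := moment_lemma p c hmom i0
    rw [hi0] at hml
    rw [Finset.sum_filter, Fintype.sum_sum_type] at hml
    simp only [hpdef, hcdef, Sum.elim_inl, Sum.elim_inr] at hml
    have hneg : ∑ z, (if (fun v => β (φ v) z) = q then -α z else 0)
        = -∑ z, (if (fun v => β (φ v) z) = q then α z else 0) := by
      rw [← Finset.sum_neg_distrib]
      exact Finset.sum_congr rfl fun z _ => by split <;> simp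
    rw [hneg] at hml
    rw [Finset.sum_filter, Finset.sum_filter]
    linarith
  have hexπ : ∀ w, ∃ z, (fun v => β (φ v) z) = (fun v => β (ψ v) w) := by
    intro w
    by_contra hno
    push_neg at hno
    have hs := hsplit (fun v => β (ψ v) w) (Or.inl ⟨w, rfl⟩)
    have hR : ∑ z ∈ Finset.univ.filter
        (fun z => (fun v => β (φ v) z) = fun v => β (ψ v) w), α z = 0 := by
      refine Finset.sum_eq_zero fun z hz => ?_
      exact absurd (Finset.mem_filter.mp hz).2 (hno z)
    have hL : 0 < ∑ w' ∈ Finset.univ.filter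
        (fun w' => (fun v => β (ψ v) w') = fun v => β (ψ v) w), α w' := by
      refine Finset.sum_pos' (fun i _ => le_of_lt (hα i)) ⟨w, ?_, hα w⟩
      simp only [Finset.mem_filter, Finset.mem_univ, true_and]
    rw [hs, hR] at hL
    exact lt_irrefl 0 hL
  choose π hπ using hexπ
  have hi : ∀ v w, β (ψ v) w = β (φ v) (π w) := fun v w => (congrFun (hπ w) v).symm
  have hπsurj : ∀ z, ∃ w, π w = z := by
    intro z
    by_contra hno
    push_neg at hno
    have hs := hsplit (fun v => β (φ v) z) (Or.inr ⟨z, rfl⟩)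
    have hR : ∑ z' ∈ Finset.univ.filter
        (fun z' => (fun v => β (φ v) z') = fun v => β (φ v) z), α z' = α z := by
      have hfil : Finset.univ.filter
          (fun z' => (fun v => β (φ v) z') = fun v => β (φ v) z) = {z} := by
        ext z'
        simp only [Finset.mem_filter, Finset.mem_univ, true_and, Finset.mem_singleton]
        constructor
        · intro hz'; exact hPφinj z' z hz'
        · intro hz'; rw [hz']
      rw [hfil, Finset.sum_singleton]
    have hL : ∑ w ∈ Finset.univ.filter
        (fun w => (fun v => β (ψ v) w) = fun v => β (φ v) z), α w = 0 := by
      refine Finset.sum_eq_zero fun w hw => ?_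
      exfalso
      apply hno w
      apply hPφinj
      rw [hπ w]
      exact (Finset.mem_filter.mp hw).2
    rw [hL, hR] at hs
    exact absurd hs.symm (ne_of_gt (hα z))
  have hψinj : Function.Injective ψ := by
    intro a b hab
    apply hφ.1
    apply htf
    intro l
    obtain ⟨w, rfl⟩ := hπsurj l
    rw [← hi a w, ← hi b w, hab]
  -- the permutation g and the orbit argument
  have hπbij : Function.Bijective π := Finite.surjective_iff_bijective.mp hπsurj
  have hψbij : Function.Bijective ψ := Finite.injective_iff_bijective.mp hψinj
  set eφ : Fin m ≃ Fin m := Equiv.ofBijective φ hφ with heφ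
  set g : Fin m → Fin m := fun u => π (ψ (eφ.symm u)) with hgdef
  have hgφ : ∀ j, g (φ j) = π (ψ j) := by
    intro j
    rw [hgdef]
    have : eφ.symm (φ j) = j := by
      rw [show φ j = eφ j from rfl]
      exact eφ.symm_apply_apply j
    simp only [this]
  have hgbij : Function.Bijective g := by
    rw [hgdef]
    exact hπbij.comp (hψbij.comp eφ.symm.bijective)
  have hK : ∀ u v, v ≠ u → β v (g u) = β v u := by
    intro u v hvu
    obtain ⟨i, rfl⟩ := hφ.2 v
    have hu : φ (eφ.symm u) = u := eφ.apply_symm_apply u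
    have hij : i ≠ eφ.symm u := fun hcon => hvu (by rw [hcon, hu])
    calc β (φ i) (g u) = β (φ i) (π (ψ (eφ.symm u))) := by rw [hgdef]
      _ = β (ψ i) (ψ (eφ.symm u)) := (hi i (ψ (eφ.symm u))).symm
      _ = β (φ i) (φ (eφ.symm u)) := hii i (eφ.symm u) hij
      _ = β (φ i) u := by rw [hu]
  have hdiag : ∀ u, β u (g u) = β u u := by
    intro u
    set G : Equiv.Perm (Fin m) := Equiv.ofBijective g hgbij with hGdef
    have hGg : ∀ x, G x = g x := fun x => rfl
    have hPn : 0 < orderOf G ∧ (G ^ orderOf G) u = u :=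
      ⟨orderOf_pos G, by rw [pow_orderOf_eq_one]; rfl⟩
    have hEx : ∃ n, 0 < n ∧ (G ^ n) u = u := ⟨orderOf G, hPn⟩
    set n0 := Nat.find hEx with hn0def
    have hn0 : 0 < n0 ∧ (G ^ n0) u = u := Nat.find_spec hEx
    have chain : ∀ k : ℕ, 0 < k → k ≤ n0 → β u ((G ^ k) u) = β u (g u) := by
      intro k
      induction k with
      | zero => intro h0; exact absurd h0 (lt_irrefl 0)
      | succ k ih =>
        intro _ hk1
        rcases Nat.eq_zero_or_pos k with rfl | hk
        · rw [pow_one, hGg]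
        · have hkn : k < n0 := lt_of_lt_of_le (Nat.lt_succ_self k) hk1
          have hne' : (G ^ k) u ≠ u := fun hcon =>
            Nat.find_min hEx hkn ⟨hk, hcon⟩
          have hstep : (G ^ (k + 1)) u = g ((G ^ k) u) := by
            rw [pow_succ', Equiv.Perm.mul_apply, hGg]
          rw [hstep, hK ((G ^ k) u) u (Ne.symm hne'), ih hk (le_of_lt hkn)]
    have := chain n0 hn0.1 le_rfl
    rw [hn0.2] at this
    exact this.symm
  have hgid : ∀ u, g u = u := by
    intro u
    apply htf
    intro l
    rw [hβ (g u) l, hβ u l]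
    by_cases hlu : l = u
    · rw [hlu]; exact hdiag u
    · exact hK u l hlu
  have hπψ : ∀ j, π (ψ j) = φ j := by
    intro j
    rw [← hgφ j, hgid (φ j)]
  refine ⟨?_, hψbij⟩
  intro i j
  rw [hi i (ψ j), hπψ j]
end

section
/- Let G be a twin-free weighted graph with |V(G)| = m, and let φ, ψ: [1,k] → V(G) be equivalent maps (hom_φ(F,G) = hom_ψ(F,G) for all k-labeled graphs F) with φ surjective. Then there is an automorphism σ of G with ψ = σ ∘ φ. -/
open scoped BigOperators Classical

section Interp

open MvPolynomial

/-- Interpolation: a polynomial that is 1 at `x` and 0 on `S \ {x}`. -/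
lemma interp_poly {ι : Type} (S : Finset (ι → ℝ)) (x : ι → ℝ) :
    ∃ p : MvPolynomial ι ℝ, eval x p = 1 ∧ ∀ z ∈ S, z ≠ x → eval z p = 0 := by
  classical
  have key : ∀ z : ι → ℝ, z ≠ x → ∃ i, x i ≠ z i := by
    intro z hz
    by_contra hc
    push_neg at hc
    exact hz (funext fun i => (hc i).symm)
  set q : (ι → ℝ) → MvPolynomial ι ℝ := fun z =>
    if h : ∃ i, x i ≠ z i then
      C ((x h.choose - z h.choose)⁻¹) * (X h.choose - C (z h.choose))
    else 1 with hq
  refine ⟨∏ z ∈ S.erase x, q z, ?_, ?_⟩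
  · rw [map_prod]
    refine Finset.prod_eq_one fun z hz => ?_
    have hzx : z ≠ x := (Finset.mem_erase.mp hz).1
    have h : ∃ i, x i ≠ z i := key z hzx
    simp only [hq, dif_pos h, map_mul, eval_C, map_sub, eval_X]
    exact inv_mul_cancel₀ (sub_ne_zero.mpr h.choose_spec)
  · intro z hz hzx
    rw [map_prod]
    refine Finset.prod_eq_zero (Finset.mem_erase.mpr ⟨hzx, hz⟩) ?_
    have h : ∃ i, x i ≠ z i := key z hzx
    simp [hq, dif_pos h]

/-- Linear extension of moment identities from monomials to all polynomials. -/
lemma moment_ext {ι W : Type} [Fintype ι] [Fintype W] (c c' : W → ℝ) (f f' : W → ι → ℝ)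
    (h : ∀ d : ι → ℕ, ∑ w, c w * ∏ i, f w i ^ d i = ∑ w, c' w * ∏ i, f' w i ^ d i)
    (p : MvPolynomial ι ℝ) :
    ∑ w, c w * eval (f w) p = ∑ w, c' w * eval (f' w) p := by
  induction p using MvPolynomial.induction_on' with
  | monomial d a =>
    have hd : ∀ (x : ι → ℝ), eval x (monomial d a) = a * ∏ i, x i ^ d i := by
      intro x
      rw [eval_monomial, Finsupp.prod_pow]
    simp only [hd]
    calc ∑ w, c w * (a * ∏ i, f w i ^ d i)
        = a * ∑ w, c w * ∏ i, f w i ^ d i := by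
          rw [Finset.mul_sum]; exact Finset.sum_congr rfl fun w _ => by ring
      _ = a * ∑ w, c' w * ∏ i, f' w i ^ d i := by rw [h (fun i => d i)]
      _ = ∑ w, c' w * (a * ∏ i, f' w i ^ d i) := by
          rw [Finset.mul_sum]; exact Finset.sum_congr rfl fun w _ => by ring
  | add p q hp hq =>
    simp only [map_add, mul_add, Finset.sum_add_distrib, hp, hq]

end Interp

section Graphs

variable {k : ℕ}

/-- A multiset of star edges from the apex `Sum.inr j` to label `i`, with multiplicity `d i`. -/
noncomputable def starM {J : Type} (j : J) (d : Fin k → ℕ) :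
    Multiset ((Fin k ⊕ J) × (Fin k ⊕ J)) :=
  Finset.univ.val.bind fun i : Fin k => Multiset.replicate (d i) (Sum.inr j, Sum.inl i)

lemma starM_loopless {J : Type} (j : J) (d : Fin k → ℕ) :
    ∀ e ∈ starM j d, e.1 ≠ e.2 := by
  intro e he
  simp only [starM, Multiset.mem_bind, Multiset.mem_replicate] at he
  obtain ⟨i, _, _, rfl⟩ := he
  simp

lemma starM_prod {J : Type} (j : J) (d : Fin k → ℕ)
    (F : (Fin k ⊕ J) × (Fin k ⊕ J) → ℝ) :
    ((starM j d).map F).prod = ∏ i, F (Sum.inr j, Sum.inl i) ^ d i := by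
  rw [starM, Multiset.map_bind, Multiset.prod_bind, Finset.prod_eq_multiset_prod]
  congr 1
  refine Multiset.map_congr rfl fun i _ => ?_
  simp [Multiset.map_replicate, Multiset.prod_replicate]

/-- A `k`-labeled graph whose vertex set is `Fin k ⊕ J`, with labels `Sum.inl`. -/
noncomputable def mkKG (k : ℕ) (J : Type) [Fintype J] [DecidableEq J]
    (E : Multiset ((Fin k ⊕ J) × (Fin k ⊕ J))) (hE : ∀ e ∈ E, e.1 ≠ e.2) : KGraph k where
  V := Fin k ⊕ J
  lab := Sum.inl
  lab_inj := Sum.inl_injective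
  edges := E
  loopless := hE

lemma homPhi_mkKG {m : ℕ} (α : Fin m → ℝ) (β : Fin m → Fin m → ℝ) (hα : ∀ i, 0 < α i)
    {J : Type} [Fintype J] [DecidableEq J]
    (E : Multiset ((Fin k ⊕ J) × (Fin k ⊕ J))) (hE : ∀ e ∈ E, e.1 ≠ e.2)
    (χ : Fin k → Fin m) :
    homPhi α β (mkKG k J E hE) χ =
      ∑ g : J → Fin m, (∏ j, α (g j)) *
        (E.map (fun e => β (Sum.elim χ g e.1) (Sum.elim χ g e.2))).prod := by
  have hP : (∏ i, α (χ i)) ≠ 0 := ne_of_gt (Finset.prod_pos fun i _ => hα _)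
  rw [homPhi]
  dsimp only [mkKG]
  refine Finset.sum_nbij' (fun ψ' => ψ' ∘ Sum.inr) (fun g => Sum.elim χ g)
    (fun _ _ => Finset.mem_univ _) ?_ ?_ ?_ ?_
  · intro g _
    refine Finset.mem_filter.mpr ⟨Finset.mem_univ _, ?_⟩
    funext i; rfl
  · intro ψ' hψ'
    have hc : ψ' ∘ Sum.inl = χ := (Finset.mem_filter.mp hψ').2
    funext u
    cases u with
    | inl i => exact (congrFun hc i).symm
    | inr j => rfl
  · intro g _
    funext j; rfl
  · intro ψ' hψ'
    have hc : ψ' ∘ Sum.inl = χ := (Finset.mem_filter.mp hψ').2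
    have hrepr : ψ' = Sum.elim χ (ψ' ∘ Sum.inr) := by
      funext u
      cases u with
      | inl i => exact congrFun hc i
      | inr j => rfl
    rw [← hrepr]
    congr 1
    rw [hrepr]
    erw [Fintype.prod_sum_type]
    simp only [Sum.elim_inl, Sum.elim_inr, Function.comp_apply]
    exact mul_div_cancel_left₀ _ hP

end Graphs

section GraphEval

variable {k m : ℕ}

/-- Edge set for the two-apex gadget. -/
noncomputable def E1 (d e : Fin k → ℕ) : Multiset ((Fin k ⊕ Bool) × (Fin k ⊕ Bool)) :=
  starM false d + starM true e + {(Sum.inr false, Sum.inr true)}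

lemma E1_loopless (d e : Fin k → ℕ) : ∀ x ∈ E1 d e, x.1 ≠ x.2 := by
  intro x hx
  simp only [E1, Multiset.mem_add, Multiset.mem_singleton] at hx
  rcases hx with (hx | hx) | hx
  · exact starM_loopless _ _ _ hx
  · exact starM_loopless _ _ _ hx
  · subst hx; simp

lemma hom0_eval (α : Fin m → ℝ) (β : Fin m → Fin m → ℝ) (hα : ∀ i, 0 < α i)
    (d : Fin k → ℕ) (χ : Fin k → Fin m) :
    homPhi α β (mkKG k Unit (starM () d) (starM_loopless () d)) χ
      = ∑ w : Fin m, α w * ∏ i, β w (χ i) ^ d i := by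
  rw [homPhi_mkKG α β hα]
  refine Fintype.sum_equiv (Equiv.funUnique Unit (Fin m)) _ _ fun g => ?_
  rw [starM_prod]
  simp [Equiv.funUnique]

lemma hom1_eval (α : Fin m → ℝ) (β : Fin m → Fin m → ℝ) (hα : ∀ i, 0 < α i)
    (d e : Fin k → ℕ) (χ : Fin k → Fin m) :
    homPhi α β (mkKG k Bool (E1 d e) (E1_loopless d e)) χ
      = ∑ w : Fin m × Fin m, (α w.1 * α w.2 * β w.1 w.2) *
          ((∏ i, β w.1 (χ i) ^ d i) * (∏ i, β w.2 (χ i) ^ e i)) := by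
  rw [homPhi_mkKG α β hα]
  refine Fintype.sum_equiv (Equiv.boolArrowEquivProd (Fin m)) _ _ fun g => ?_
  simp only [E1, Multiset.map_add, Multiset.prod_add, starM_prod,
    Multiset.map_singleton, Multiset.prod_singleton, Sum.elim_inl, Sum.elim_inr,
    Equiv.boolArrowEquivProd_apply, Fintype.prod_bool]
  ring

end GraphEval

/-- Claim 4: if `G` is twin-free, `φ, ψ : [1,k] → V(G)` are equivalent and
`φ` is surjective, then `ψ = σ ∘ φ` for some automorphism `σ` of `G`. -/
theorem equivalent_of_surjective {m k : ℕ} (α : Fin m → ℝ) (β : Fin m → Fin m → ℝ)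
    (hα : ∀ i, 0 < α i) (hβ : ∀ i j, β i j = β j i)
    (htf : ∀ i j : Fin m, (∀ l, β i l = β j l) → i = j)
    (φ ψ : Fin k → Fin m) (hφ : Function.Surjective φ)
    (h : ∀ F : KGraph k, homPhi α β F φ = homPhi α β F ψ) :
    ∃ σ : Equiv.Perm (Fin m), IsAut α β σ ∧ ψ = ⇑σ ∘ φ := by
  classical
  set f : Fin m → Fin k → ℝ := fun w i => β w (φ i) with hf
  set g : Fin m → Fin k → ℝ := fun w i => β w (ψ i) with hg
  have hfinj : Function.Injective f := by
    intro w w' hww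
    refine htf w w' fun l => ?_
    obtain ⟨i, rfl⟩ := hφ l
    exact congrFun hww i
  have P0 : ∀ p : MvPolynomial (Fin k) ℝ,
      ∑ w, α w * MvPolynomial.eval (f w) p = ∑ w, α w * MvPolynomial.eval (g w) p := by
    refine moment_ext _ _ _ _ fun d => ?_
    have h0 := h (mkKG k Unit (starM () d) (starM_loopless () d))
    rw [hom0_eval α β hα, hom0_eval α β hα] at h0
    exact h0
  set S : Finset (Fin k → ℝ) := Finset.image f Finset.univ ∪ Finset.image g Finset.univ with hS
  have hfS : ∀ w, f w ∈ S :=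
    fun w => Finset.mem_union_left _ (Finset.mem_image_of_mem f (Finset.mem_univ w))
  have hgS : ∀ w, g w ∈ S :=
    fun w => Finset.mem_union_right _ (Finset.mem_image_of_mem g (Finset.mem_univ w))
  have hsum : ∀ (u : Fin m → Fin k → ℝ), (∀ w, u w ∈ S) → ∀ (x : Fin k → ℝ)
      (p : MvPolynomial (Fin k) ℝ), MvPolynomial.eval x p = 1 →
      (∀ z ∈ S, z ≠ x → MvPolynomial.eval z p = 0) →
      ∑ w, α w * MvPolynomial.eval (u w) p
        = ∑ w ∈ Finset.univ.filter (fun w => u w = x), α w := by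
    intro u hu x p hp1 hp0
    rw [Finset.sum_filter]
    refine Finset.sum_congr rfl fun w _ => ?_
    by_cases hw : u w = x
    · rw [if_pos hw, hw, hp1, mul_one]
    · rw [if_neg hw, hp0 _ (hu w) hw, mul_zero]
  have hsub : ∀ w0, ∃ a, f a = g w0 := by
    intro w0
    by_contra hc
    push_neg at hc
    obtain ⟨p, hp1, hp0⟩ := interp_poly S (g w0)
    have key : ∑ w ∈ Finset.univ.filter (fun w => f w = g w0), α w
        = ∑ w ∈ Finset.univ.filter (fun w => g w = g w0), α w := by
      rw [← hsum f hfS (g w0) p hp1 hp0, ← hsum g hgS (g w0) p hp1 hp0]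
      exact P0 p
    have h1 : Finset.univ.filter (fun w => f w = g w0) = ∅ :=
      Finset.filter_false_of_mem fun w _ => hc w
    have h2 : (0:ℝ) < ∑ w ∈ Finset.univ.filter (fun w => g w = g w0), α w :=
      Finset.sum_pos (fun w _ => hα w)
        ⟨w0, Finset.mem_filter.mpr ⟨Finset.mem_univ _, rfl⟩⟩
    rw [h1, Finset.sum_empty] at key
    rw [← key] at h2
    exact lt_irrefl 0 h2
  choose ρ1 hρ1 using hsub
  have hρsurj : Function.Surjective ρ1 := by
    intro a
    by_contra hc
    push_neg at hc
    have hc' : ∀ w, g w ≠ f a := by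
      intro w hw
      exact hc w (hfinj ((hρ1 w).trans hw))
    obtain ⟨p, hp1, hp0⟩ := interp_poly S (f a)
    have key : ∑ w ∈ Finset.univ.filter (fun w => f w = f a), α w
        = ∑ w ∈ Finset.univ.filter (fun w => g w = f a), α w := by
      rw [← hsum f hfS (f a) p hp1 hp0, ← hsum g hgS (f a) p hp1 hp0]
      exact P0 p
    have h1 : Finset.univ.filter (fun w => g w = f a) = ∅ :=
      Finset.filter_false_of_mem fun w _ => hc' w
    have h2 : (0:ℝ) < ∑ w ∈ Finset.univ.filter (fun w => f w = f a), α w :=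
      Finset.sum_pos (fun w _ => hα w)
        ⟨a, Finset.mem_filter.mpr ⟨Finset.mem_univ _, rfl⟩⟩
    rw [key, h1, Finset.sum_empty] at h2
    exact lt_irrefl 0 h2
  have hρinj : Function.Injective ρ1 := Finite.injective_iff_surjective.mpr hρsurj
  set ρ : Equiv.Perm (Fin m) := Equiv.ofBijective ρ1 ⟨hρinj, hρsurj⟩ with hρdef
  have hρcoe : ∀ w, ρ w = ρ1 w := fun w => rfl
  have hfiltf : ∀ a, Finset.univ.filter (fun w => f w = f a) = {a} := by
    intro a; ext w; simp [hfinj.eq_iff]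
  have hfiltg : ∀ a, Finset.univ.filter (fun w => g w = f (ρ1 a)) = {a} := by
    intro a; ext w
    simp only [Finset.mem_filter, Finset.mem_univ, true_and, Finset.mem_singleton]
    constructor
    · intro hw
      exact hρinj (hfinj ((hρ1 w).trans hw))
    · rintro rfl
      exact (hρ1 w).symm
  have hαρ : ∀ w, α (ρ1 w) = α w := by
    intro w
    obtain ⟨p, hp1, hp0⟩ := interp_poly S (f (ρ1 w))
    have key := (hsum f hfS _ p hp1 hp0).symm.trans
      ((P0 p).trans (hsum g hgS _ p hp1 hp0))
    rw [hfiltf (ρ1 w), hfiltg w, Finset.sum_singleton, Finset.sum_singleton] at key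
    exact key
  have P1 : ∀ p : MvPolynomial (Fin k ⊕ Fin k) ℝ,
      ∑ w : Fin m × Fin m,
          (α w.1 * α w.2 * β w.1 w.2) * MvPolynomial.eval (Sum.elim (f w.1) (f w.2)) p
        = ∑ w : Fin m × Fin m,
          (α w.1 * α w.2 * β w.1 w.2) * MvPolynomial.eval (Sum.elim (g w.1) (g w.2)) p := by
    refine moment_ext _ _ _ _ fun D => ?_
    have h1 := h (mkKG k Bool (E1 (D ∘ Sum.inl) (D ∘ Sum.inr))
      (E1_loopless (D ∘ Sum.inl) (D ∘ Sum.inr)))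
    rw [hom1_eval α β hα, hom1_eval α β hα] at h1
    have hsplit : ∀ (x y : Fin k → ℝ),
        (∏ i : Fin k ⊕ Fin k, (Sum.elim x y) i ^ D i)
          = (∏ i, x i ^ D (Sum.inl i)) * (∏ i, y i ^ D (Sum.inr i)) := by
      intro x y
      rw [Fintype.prod_sum_type]
      simp
    simp only [hsplit]
    simpa [hf, hg, Function.comp] using h1
  have hβρ : ∀ w1 w2, β (ρ1 w1) (ρ1 w2) = β w1 w2 := by
    intro w1 w2
    obtain ⟨pa, ha1, ha0⟩ := interp_poly S (f (ρ1 w1))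
    obtain ⟨pb, hb1, hb0⟩ := interp_poly S (f (ρ1 w2))
    set p := (MvPolynomial.rename Sum.inl pa) * (MvPolynomial.rename Sum.inr pb) with hpdef
    have hev : ∀ x y : Fin k → ℝ, MvPolynomial.eval (Sum.elim x y) p
        = MvPolynomial.eval x pa * MvPolynomial.eval y pb := by
      intro x y
      rw [hpdef, map_mul, MvPolynomial.eval_rename, MvPolynomial.eval_rename,
        Sum.elim_comp_inl, Sum.elim_comp_inr]
    have ind : ∀ (u : Fin m → Fin k → ℝ), (∀ w, u w ∈ S) → ∀ a b : Fin m,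
        (∀ w, u w = f (ρ1 w1) ↔ w = a) → (∀ w, u w = f (ρ1 w2) ↔ w = b) →
        ∑ w : Fin m × Fin m,
            (α w.1 * α w.2 * β w.1 w.2) * MvPolynomial.eval (Sum.elim (u w.1) (u w.2)) p
          = α a * α b * β a b := by
      intro u hu a b hua hub
      rw [Finset.sum_eq_single (a, b)]
      · rw [hev, (hua a).mpr rfl, (hub b).mpr rfl, ha1, hb1, mul_one, mul_one]
      · intro w _ hw
        rw [hev]
        by_cases h1 : u w.1 = f (ρ1 w1)
        · have hw1 : w.1 = a := (hua w.1).mp h1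
          have hw2 : w.2 ≠ b := by
            intro hw2
            exact hw (Prod.ext hw1 hw2)
          have h2 : u w.2 ≠ f (ρ1 w2) := fun hc => hw2 ((hub w.2).mp hc)
          rw [hb0 _ (hu w.2) h2, mul_zero, mul_zero]
        · rw [ha0 _ (hu w.1) h1, zero_mul, mul_zero]
      · intro habs
        exact absurd (Finset.mem_univ _) habs
    have hL := ind f hfS (ρ1 w1) (ρ1 w2)
      (fun w => ⟨fun h' => hfinj h', fun h' => by rw [h']⟩)
      (fun w => ⟨fun h' => hfinj h', fun h' => by rw [h']⟩)
    have hR := ind g hgS w1 w2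
      (fun w => ⟨fun h' => hρinj (hfinj ((hρ1 w).trans h')),
        fun h' => by rw [h']; exact (hρ1 w1).symm⟩)
      (fun w => ⟨fun h' => hρinj (hfinj ((hρ1 w).trans h')),
        fun h' => by rw [h']; exact (hρ1 w2).symm⟩)
    have key := (hL.symm.trans (P1 p)).trans hR
    rw [hαρ, hαρ] at key
    exact mul_left_cancel₀ (mul_ne_zero (ne_of_gt (hα w1)) (ne_of_gt (hα w2))) key
  refine ⟨ρ.symm, ⟨?_, ?_⟩, ?_⟩
  · intro v
    have e := hαρ (ρ.symm v)
    rw [show ρ1 (ρ.symm v) = v from ρ.apply_symm_apply v] at e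
    exact e.symm
  · intro u v
    have e := hβρ (ρ.symm u) (ρ.symm v)
    rw [show ρ1 (ρ.symm u) = u from ρ.apply_symm_apply u,
      show ρ1 (ρ.symm v) = v from ρ.apply_symm_apply v] at e
    exact e.symm
  · funext i
    show ψ i = ρ.symm (φ i)
    refine htf (ψ i) (ρ.symm (φ i)) fun l => ?_
    have e1 : β (ρ.symm (φ i)) l = β (φ i) (ρ1 l) := by
      have e := hβρ (ρ.symm (φ i)) l
      rw [show ρ1 (ρ.symm (φ i)) = φ i from ρ.apply_symm_apply (φ i)] at e
      exact e.symm
    have e2 : β (φ i) (ρ1 l) = β (ψ i) l := by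
      have e := congrFun (hρ1 l) i
      simp only [hf, hg] at e
      calc β (φ i) (ρ1 l) = β (ρ1 l) (φ i) := hβ _ _
        _ = β l (ψ i) := e
        _ = β (ψ i) l := hβ _ _
    rw [e1, e2]
end

section
/- The map f_k: 𝒢_k → 𝒜_k sending a k-labeled graph F to Σ_{φ: [1,k] → V(G)} hom_φ(F,G)·φ (extended linearly to quantum graphs) is an algebra homomorphism from the gluing algebra of k-labeled quantum graphs to the function algebra on V(G)^k with pointwise product, and it preserves the inner products ⟨x,y⟩ = hom(xy, G) on 𝒢_k and ⟨φ,ψ⟩ = α_φ·[φ=ψ] on 𝒜_k. -/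
open scoped BigOperators Classical

/-- The linear extension of `F ↦ (φ ↦ hom_φ(F,G))` to quantum graphs: the algebra
homomorphism `f_k : 𝒢_k → 𝒜_k`. -/
noncomputable def qFk {W : Type} [Fintype W] [DecidableEq W] {k : ℕ}
    (α : W → ℝ) (β : W → W → ℝ) (x : KGraph k →₀ ℝ) : (Fin k → W) → ℝ :=
  x.sum fun F c => c • fun φ => homPhi α β F φ

/-- The gluing product on `k`-labeled quantum graphs. -/
noncomputable def qMul {k : ℕ} (x y : KGraph k →₀ ℝ) : KGraph k →₀ ℝ :=
  x.sum fun F₁ c₁ => y.sum fun F₂ c₂ => Finsupp.single (glue F₁ F₂) (c₁ * c₂)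

/-- The linear extension of `hom(·, G)` to quantum graphs. -/
noncomputable def qHom {W : Type} [Fintype W] [DecidableEq W] {k : ℕ}
    (α : W → ℝ) (β : W → W → ℝ) (x : KGraph k →₀ ℝ) : ℝ :=
  x.sum fun F c => c * homT α β F

section Helpers
variable {m k : ℕ} (α : Fin m → ℝ) (β : Fin m → Fin m → ℝ)

lemma prod_split (F : KGraph k) (φ : Fin k → Fin m) (ψ : F.V → Fin m)
    (h : ψ ∘ F.lab = φ) :
    (∏ u, α (ψ u)) =
      (∏ i, α (φ i)) * ∏ v : {v : F.V // v ∉ Set.range F.lab}, α (ψ v) := by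
  classical
  rw [← Equiv.prod_comp (Equiv.sumCompl (fun v : F.V => v ∈ Set.range F.lab))
    (fun v => α (ψ v)), Fintype.prod_sum_type]
  congr 1
  rw [← Equiv.prod_comp (Equiv.ofInjective F.lab F.lab_inj)
    (fun v : {v : F.V // v ∈ Set.range F.lab} =>
      α (ψ ((Equiv.sumCompl (fun v : F.V => v ∈ Set.range F.lab)) (Sum.inl v))))]
  refine Finset.prod_congr rfl fun i _ => ?_
  simp [Equiv.ofInjective, ← congrFun h i]

lemma emb_not_mem (F₁ F₂ : KGraph k) (v : F₂.V) (h : v ∉ Set.range F₂.lab) :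
    KGraph.emb F₁ F₂ v = Sum.inr ⟨v, h⟩ := dif_neg h

lemma emb_lab (F₁ F₂ : KGraph k) (i : Fin k) :
    KGraph.emb F₁ F₂ (F₂.lab i) = Sum.inl (F₁.lab i) := by
  rw [KGraph.emb, dif_pos ⟨i, rfl⟩]
  congr 2
  exact (Equiv.ofInjective F₂.lab F₂.lab_inj).symm_apply_apply i

lemma homPhi_glue (hα : ∀ i, 0 < α i) (F₁ F₂ : KGraph k) (φ : Fin k → Fin m) :
    homPhi α β (glue F₁ F₂) φ = homPhi α β F₁ φ * homPhi α β F₂ φ := by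
  classical
  have hαφ : (∏ i, α (φ i)) ≠ 0 :=
    (Finset.prod_pos fun i _ => hα (φ i)).ne'
  rw [homPhi, homPhi, homPhi, Finset.sum_mul_sum, ← Finset.sum_product']
  simp only [glue]
  refine Finset.sum_nbij' (fun ψ => (ψ ∘ Sum.inl, ψ ∘ KGraph.emb F₁ F₂))
    (fun p => Sum.elim p.1 (fun v => p.2 v.1)) ?_ ?_ ?_ ?_ ?_
  · intro ψ hψ
    replace hψ := (Finset.mem_filter.1 hψ).2
    rw [Finset.mem_product]
    refine ⟨Finset.mem_filter.2 ⟨Finset.mem_univ _, hψ⟩, ?_⟩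
    simp only [Finset.mem_filter, Finset.mem_univ, true_and]
    funext i
    simp only [Function.comp_apply, emb_lab]
    exact congrFun hψ i
  · intro p hp
    rw [Finset.mem_product] at hp
    simp only [Finset.mem_filter, Finset.mem_univ, true_and] at hp ⊢
    refine Finset.mem_filter.2 ⟨Finset.mem_univ _, ?_⟩
    funext i
    exact congrFun hp.1 i
  · intro ψ hψ
    funext v
    cases v with
    | inl a => rfl
    | inr a =>
      show ψ (KGraph.emb F₁ F₂ a.1) = ψ (Sum.inr a)
      rw [emb_not_mem F₁ F₂ a.1 a.2]
  · intro p hp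
    rw [Finset.mem_product] at hp
    simp only [Finset.mem_filter, Finset.mem_univ, true_and] at hp
    refine Prod.ext rfl ?_
    funext v
    simp only [Function.comp_apply]
    by_cases hv : v ∈ Set.range F₂.lab
    · obtain ⟨i, rfl⟩ := hv
      rw [emb_lab]
      simp only [Sum.elim_inl]
      exact (congrFun hp.1 i).trans (congrFun hp.2 i).symm
    · rw [emb_not_mem F₁ F₂ v hv]
      rfl
  · intro ψ hψ
    replace hψ := (Finset.mem_filter.1 hψ).2
    have hψ2 : (ψ ∘ KGraph.emb F₁ F₂) ∘ F₂.lab = φ := by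
      funext i
      simp only [Function.comp_apply, emb_lab]
      exact congrFun hψ i
    have hvert : (∏ u, α (ψ u)) =
        (∏ u, α (ψ (Sum.inl u))) *
          ((∏ u, α ((ψ ∘ KGraph.emb F₁ F₂) u)) / ∏ i, α (φ i)) := by
      rw [prod_split α F₂ φ (ψ ∘ KGraph.emb F₁ F₂) hψ2, Fintype.prod_sum_type]
      have : ∀ v : {v : F₂.V // v ∉ Set.range F₂.lab},
          (ψ ∘ KGraph.emb F₁ F₂) v.1 = ψ (Sum.inr v) := fun v => by
        simp only [Function.comp_apply, emb_not_mem F₁ F₂ v.1 v.2]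
      rw [Finset.prod_congr rfl (fun v _ => congrArg α (this v).symm)]
      field_simp
    have hedge : ((F₁.edges.map (fun e : F₁.V × F₁.V =>
        ((Sum.inl e.1 : F₁.V ⊕ {v : F₂.V // v ∉ Set.range F₂.lab}),
         (Sum.inl e.2 : F₁.V ⊕ {v : F₂.V // v ∉ Set.range F₂.lab}))) +
        F₂.edges.map (fun e : F₂.V × F₂.V =>
          (KGraph.emb F₁ F₂ e.1, KGraph.emb F₁ F₂ e.2))).map
        (fun e => β (ψ e.1) (ψ e.2))).prod =
        (F₁.edges.map (fun e : F₁.V × F₁.V =>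
          β ((ψ ∘ Sum.inl) e.1) ((ψ ∘ Sum.inl) e.2))).prod *
        (F₂.edges.map (fun e : F₂.V × F₂.V => β ((ψ ∘ KGraph.emb F₁ F₂) e.1)
          ((ψ ∘ KGraph.emb F₁ F₂) e.2))).prod := by
      rw [Multiset.map_add, Multiset.prod_add, Multiset.map_map, Multiset.map_map]
      rfl
    refine Eq.trans (congrArg₂ (fun a b => (a / ∏ i, α (φ i)) * b) hvert hedge) ?_
    field_simp
    simp only [Function.comp_apply]
    ring
lemma homT_eq (hα : ∀ i, 0 < α i) (F : KGraph k) :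
    homT α β F = ∑ φ : Fin k → Fin m, (∏ i, α (φ i)) * homPhi α β F φ := by
  classical
  rw [homT, ← Finset.sum_fiberwise Finset.univ (fun ψ : F.V → Fin m => ψ ∘ F.lab)
    (fun ψ => (∏ u, α (ψ u)) * (F.edges.map fun e => β (ψ e.1) (ψ e.2)).prod)]
  refine Finset.sum_congr rfl fun φ _ => ?_
  rw [homPhi, Finset.mul_sum]
  refine Finset.sum_congr rfl fun ψ hψ => ?_
  have hαφ : (∏ i, α (φ i)) ≠ 0 := (Finset.prod_pos fun i _ => hα (φ i)).ne'
  field_simp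

lemma qFk_apply (x : KGraph k →₀ ℝ) (φ : Fin k → Fin m) :
    qFk α β x φ = x.sum fun F c => c * homPhi α β F φ := by
  rw [qFk, Finsupp.sum, Finset.sum_apply]
  rfl

lemma qMul_sum (g : KGraph k → ℝ → ℝ) (hg0 : ∀ F, g F 0 = 0)
    (hg1 : ∀ F b₁ b₂, g F (b₁ + b₂) = g F b₁ + g F b₂)
    (x y : KGraph k →₀ ℝ) :
    (qMul x y).sum g = x.sum fun F₁ c₁ => y.sum fun F₂ c₂ =>
      g (glue F₁ F₂) (c₁ * c₂) := by
  classical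
  rw [qMul, Finsupp.sum_sum_index hg0 hg1]
  refine Finsupp.sum_congr fun F₁ _ => ?_
  rw [Finsupp.sum_sum_index hg0 hg1]
  refine Finsupp.sum_congr fun F₂ _ => ?_
  rw [Finsupp.sum_single_index (hg0 _)]
end Helpers

lemma sum_swap3 {A B C : Type*} [Fintype C] (s : Finset A) (t : Finset B)
    (f : A → B → C → ℝ) :
    ∑ a ∈ s, ∑ b ∈ t, ∑ c, f a b c = ∑ c, ∑ a ∈ s, ∑ b ∈ t, f a b c := by
  trans ∑ a ∈ s, ∑ c, ∑ b ∈ t, f a b c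
  · exact Finset.sum_congr rfl fun a _ => Finset.sum_comm
  · exact Finset.sum_comm

/-- `f_k` is an algebra homomorphism from the gluing algebra of `k`-labeled
quantum graphs to the function algebra on `V(G)^k`, and it preserves the inner products
`⟨x, y⟩ = hom(xy, G)` and `⟨g, h⟩ = Σ_φ α_φ g(φ) h(φ)`. -/
theorem qFk_algHom_and_inner {m k : ℕ} (α : Fin m → ℝ) (β : Fin m → Fin m → ℝ)
    (hα : ∀ i, 0 < α i) (hβ : ∀ i j, β i j = β j i) :
    (∀ x y : KGraph k →₀ ℝ, qFk α β (x + y) = qFk α β x + qFk α β y) ∧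
    (∀ (c : ℝ) (x : KGraph k →₀ ℝ), qFk α β (c • x) = c • qFk α β x) ∧
    (∀ x y : KGraph k →₀ ℝ, qFk α β (qMul x y) = qFk α β x * qFk α β y) ∧
    (∀ x y : KGraph k →₀ ℝ, qHom α β (qMul x y) =
      ∑ φ : Fin k → Fin m, (∏ i, α (φ i)) * (qFk α β x φ * qFk α β y φ)) := by
  refine ⟨?_, ?_, ?_, ?_⟩
  · intro x y
    funext φ
    rw [Pi.add_apply, qFk_apply, qFk_apply, qFk_apply]
    exact Finsupp.sum_add_index' (fun F => zero_mul _) (fun F b₁ b₂ => add_mul b₁ b₂ _)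
  · intro c x
    funext φ
    rw [Pi.smul_apply, qFk_apply, qFk_apply, smul_eq_mul,
      Finsupp.sum_smul_index (h := fun F c' => c' * homPhi α β F φ)
        (fun F => zero_mul _), Finsupp.mul_sum]
    exact Finsupp.sum_congr fun F _ => mul_assoc _ _ _
  · intro x y
    funext φ
    rw [Pi.mul_apply, qFk_apply, qFk_apply, qFk_apply,
      qMul_sum (g := fun F c => c * homPhi α β F φ)
        (fun F => zero_mul _) (fun F b₁ b₂ => add_mul _ _ _),
      Finsupp.sum_mul]
    refine Finsupp.sum_congr fun F₁ _ => ?_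
    rw [Finsupp.mul_sum]
    refine Finsupp.sum_congr fun F₂ _ => ?_
    rw [homPhi_glue α β hα F₁ F₂ φ]
    ring
  · intro x y
    rw [qHom, qMul_sum (g := fun F c => c * homT α β F)
      (fun F => zero_mul _) (fun F b₁ b₂ => add_mul _ _ _)]
    have key : ∀ F₁ F₂ : KGraph k, homT α β (glue F₁ F₂) =
        ∑ φ : Fin k → Fin m, (∏ i, α (φ i)) *
          (homPhi α β F₁ φ * homPhi α β F₂ φ) := by
      intro F₁ F₂
      rw [homT_eq α β hα]
      exact Finset.sum_congr rfl fun φ _ => by rw [homPhi_glue α β hα]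
    simp only [key, Finsupp.sum, Finset.mul_sum]
    rw [sum_swap3]
    refine Finset.sum_congr rfl fun φ _ => ?_
    rw [qFk_apply, qFk_apply]
    simp only [Finsupp.sum]
    rw [Finset.sum_mul_sum, Finset.mul_sum]
    refine Finset.sum_congr rfl fun F₁ _ => ?_
    rw [Finset.mul_sum]
    refine Finset.sum_congr rfl fun F₂ _ => ?_
    ring
end

section
/- The trace operators intertwine: for every k-labeled graph F (k ≥ 1), tr(f_k(F)) = f_{k−1}(tr(F)), where on graphs tr erases the label k, and on 𝒜_k, tr sends a map φ: [1,k] → V(G) to α_{φ(k)} times its restriction to [1,k−1]. Consequently, tr maps the image f_k(𝒢_k) into f_{k−1}(𝒢_{k−1}). -/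
open scoped BigOperators Classical

/-- Erasing the label `k+1` from a `(k+1)`-labeled graph. -/
def trG {k : ℕ} (F : KGraph (k + 1)) : KGraph k where
  V := F.V
  lab := fun i => F.lab i.castSucc
  lab_inj := F.lab_inj.comp (Fin.castSucc_injective k)
  edges := F.edges
  loopless := F.loopless

open Finset in
theorem trace_key {m k : ℕ} (α : Fin m → ℝ) (β : Fin m → Fin m → ℝ)
    (hα : ∀ i, 0 < α i) (F : KGraph (k + 1)) (φ : Fin k → Fin m) :
    ∑ v, α v * homPhi α β F (Fin.snoc φ v) = homPhi α β (trG F) φ := by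
  classical
  unfold homPhi
  have hfib : ∀ (ψ : F.V → Fin m) (v : Fin m),
      (ψ ∘ F.lab = Fin.snoc φ v) ↔
        ((ψ ∘ (trG F).lab = φ) ∧ ψ (F.lab (Fin.last k)) = v) := by
    intro ψ v
    constructor
    · intro h
      refine ⟨funext fun i => ?_, ?_⟩
      · have := congrFun h i.castSucc
        simpa [trG] using this
      · have := congrFun h (Fin.last k)
        simpa using this
    · rintro ⟨h1, h2⟩
      funext i
      refine Fin.lastCases ?_ (fun j => ?_) i
      · simpa using h2
      · have := congrFun h1 j
        simpa [trG] using this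
  have step1 : ∀ v : Fin m,
      α v * ∑ ψ ∈ univ.filter (fun ψ : F.V → Fin m => ψ ∘ F.lab = Fin.snoc φ v),
        ((∏ u, α (ψ u)) / ∏ i : Fin (k + 1), α ((Fin.snoc φ v : Fin (k + 1) → Fin m) i)) *
          (F.edges.map (fun e => β (ψ e.1) (ψ e.2))).prod
      = ∑ ψ ∈ univ.filter (fun ψ : F.V → Fin m => ψ ∘ F.lab = Fin.snoc φ v),
        ((∏ u, α (ψ u)) / ∏ i : Fin k, α (φ i)) *
          (F.edges.map (fun e => β (ψ e.1) (ψ e.2))).prod := by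
    intro v
    rw [Finset.mul_sum]
    refine Finset.sum_congr rfl fun ψ _ => ?_
    have hden : (∏ i : Fin (k + 1), α ((Fin.snoc φ v : Fin (k + 1) → Fin m) i))
        = (∏ i : Fin k, α (φ i)) * α v := by
      rw [Fin.prod_univ_castSucc]
      simp
    rw [hden]
    have hv : α v ≠ 0 := (hα v).ne'
    have hP : (∏ i : Fin k, α (φ i)) ≠ 0 :=
      Finset.prod_ne_zero_iff.mpr fun i _ => (hα (φ i)).ne'
    field_simp
  simp only [step1]
  have := Finset.sum_fiberwise
    (Finset.univ.filter (fun ψ : F.V → Fin m => ψ ∘ (trG F).lab = φ))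
    (fun ψ : F.V → Fin m => ψ (F.lab (Fin.last k)))
    (fun ψ : F.V → Fin m =>
      ((∏ u, α (ψ u)) / ∏ i : Fin k, α (φ i)) *
        (F.edges.map (fun e => β (ψ e.1) (ψ e.2))).prod)
  rw [show (trG F).edges = F.edges from rfl] at *
  refine Eq.trans ?_ this
  refine Finset.sum_congr rfl fun v _ => ?_
  rw [Finset.filter_filter]
  refine Finset.sum_congr ?_ fun _ _ => rfl
  ext ψ
  simp only [Finset.mem_filter, Finset.mem_univ, true_and]
  exact hfib ψ v

/-- the trace operators intertwine: `tr(f_{k+1}(F)) = f_k(tr(F))`, and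
consequently `tr` maps the image `f_{k+1}(𝒢_{k+1})` into `f_k(𝒢_k)`. -/
theorem trace_intertwines {m k : ℕ} (α : Fin m → ℝ) (β : Fin m → Fin m → ℝ)
    (hα : ∀ i, 0 < α i) (hβ : ∀ i j, β i j = β j i) :
    (∀ F : KGraph (k + 1),
      (fun φ : Fin k → Fin m => ∑ v, α v * homPhi α β F (Fin.snoc φ v)) =
        fun φ => homPhi α β (trG F) φ) ∧
    (∀ g : (Fin (k + 1) → Fin m) → ℝ,
      g ∈ Submodule.span ℝ
          (Set.range fun F : KGraph (k + 1) => fun φ => homPhi α β F φ) →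
      (fun φ : Fin k → Fin m => ∑ v, α v * g (Fin.snoc φ v)) ∈
        Submodule.span ℝ
          (Set.range fun F : KGraph k => fun φ => homPhi α β F φ)) := by
  have h1 : ∀ F : KGraph (k + 1),
      (fun φ : Fin k → Fin m => ∑ v, α v * homPhi α β F (Fin.snoc φ v)) =
        fun φ => homPhi α β (trG F) φ := by
    intro F
    funext φ
    exact trace_key α β hα F φ
  refine ⟨h1, ?_⟩
  intro g hg
  induction hg using Submodule.span_induction with
  | mem x hx =>
    obtain ⟨F, rfl⟩ := hx
    rw [h1 F]
    exact Submodule.subset_span ⟨trG F, rfl⟩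
  | zero =>
    convert Submodule.zero_mem _ using 1
    funext φ
    simp
  | add a b _ _ ha hb =>
    convert Submodule.add_mem _ ha hb using 1
    funext φ
    simp [mul_add, Finset.sum_add_distrib]
  | smul c a _ ha =>
    convert Submodule.smul_mem _ c ha using 1
    funext φ
    simp only [Pi.smul_apply, smul_eq_mul, Finset.mul_sum]
    exact Finset.sum_congr rfl fun v _ => by ring
end
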